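/- With the derived bracket a ∘_d b := (−1)^{|a|+1}[da, b]_A on a differential Lie superalgebra (A, [·,·]_A, d) of parity ε, the differential d is a derivation of the derived bracket: d(a ∘_d b) = (da) ∘_d b + (−1)^{|a|+ε+1} a ∘_d (db). -/
import Mathlib


/-- The sign `(−1)^i` of a parity `i ∈ Z₂`. -/
noncomputable def sgn (i : ZMod 2) : ℝ := if i = 0 then 1 else -1

/-- A differential Lie superalgebra of parity `ε`: a `Z₂`-graded real vector
space `V` (with grading given by submodules `grade i`), a bilinear bracket of
parity `ε` which is graded skew-symmetric and satisfies the graded Jacobi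
identity, and an odd derivation `d` of the bracket with `d² = 0`. -/
structure DiffLieSuper (V : Type*) [AddCommGroup V] [Module ℝ V] (ε : ZMod 2) where
  grade : ZMod 2 → Submodule ℝ V
  br : V →ₗ[ℝ] V →ₗ[ℝ] V
  d : V →ₗ[ℝ] V
  br_grade : ∀ i j, ∀ a ∈ grade i, ∀ b ∈ grade j, br a b ∈ grade (i + j + ε)
  br_skew : ∀ i j, ∀ a ∈ grade i, ∀ b ∈ grade j,
    br a b = - (sgn ((i + ε) * (j + ε)) • br b a)
  jacobi : ∀ i j, ∀ a ∈ grade i, ∀ b ∈ grade j, ∀ c,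
    br a (br b c) = br (br a b) c + sgn ((i + ε) * (j + ε)) • br b (br a c)
  d_grade : ∀ i, ∀ a ∈ grade i, d a ∈ grade (i + 1)
  d_br : ∀ i, ∀ a ∈ grade i, ∀ b,
    d (br a b) = br (d a) b + sgn (i + ε) • br a (d b)
  d_sq : ∀ a, d (d a) = 0

/-- The derived bracket `a ∘_d b := (−1)^{|a|+1}[da, b]`, where `i` is the
parity of the (homogeneous) first argument `a`. -/
noncomputable def DiffLieSuper.circd {V : Type*} [AddCommGroup V] [Module ℝ V] {ε : ZMod 2}
    (A : DiffLieSuper V ε) (i : ZMod 2) (a b : V) : V :=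
  sgn (i + 1) • A.br (A.d a) b

/-- The differential `d` is a derivation of the derived bracket:
`d(a ∘_d b) = (da) ∘_d b + (−1)^{|a|+ε+1} a ∘_d (db)`. -/
theorem derived_bracket_d_derivation {V : Type*} [AddCommGroup V] [Module ℝ V] {ε : ZMod 2}
    (A : DiffLieSuper V ε) (i : ZMod 2) (a : V) (ha : a ∈ A.grade i) (b : V) :
    A.d (A.circd i a b) =
      A.circd (i + 1) (A.d a) b + sgn (i + ε + 1) • A.circd i a (A.d b) := by
  have hda := A.d_grade i a ha
  have hdbr := A.d_br (i+1) (A.d a) hda b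
  simp only [DiffLieSuper.circd, map_smul, hdbr, A.d_sq, map_zero,
    LinearMap.zero_apply, zero_add, smul_add, smul_smul]
  rw [smul_zero, zero_add, show i + 1 + ε = i + ε + 1 from by ring, mul_comm]
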